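/- Let E : ℝⁿ → ℝⁿ be a continuous linear map, ε > 0, and for y ∈ ℝⁿ define w(y) ∈ ℝⁿ by w(y)ᵢ = 1/(2(|(E y)ᵢ| + ε)) and the robust operator P_robust(y) := w(y) ⊙ E(y). Then for all x, Δ ∈ ℝⁿ, the influence function of P_robust at x in direction Δ exists and equals 2ε·w(x)² ⊙ E(Δ − x), i.e., lim_{t→0⁺} (P_robust(tΔ + (1−t)x) − P_robust(x))/t has i-th coordinate 2ε·w(x)ᵢ²·(E(Δ − x))ᵢ. -/

import Mathlib

/-! Along the segment `t ↦ tΔ + (1 - t)x` the `i`-th coordinate of `P` is `g (a + t b)` with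
`g u = u / (2 (|u| + ε))`, `a = (E x)ᵢ`, `b = (E (Δ - x))ᵢ`. The function `g` is differentiable
everywhere, also at the kink `u = 0`, with `g' u = ε / (2 (|u| + ε)²) = 2ε w²`, so the influence
function is the derivative `g' a · b` of the coordinate at `t = 0`. -/

open Filter Topology

theorem hasDerivAt_div_abs_add {ε : ℝ} (hε : 0 < ε) (s : ℝ) :
    HasDerivAt (fun u : ℝ => u / (|u| + ε)) (ε / (|s| + ε) ^ 2) s := by
  rcases eq_or_ne s 0 with rfl | hs
  · -- at the kink the slope `t / (|t| + ε) / t` is the continuous function `1 / (|t| + ε)`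
    rw [hasDerivAt_iff_tendsto_slope]
    have hcont : Continuous fun t : ℝ => 1 / (|t| + ε) :=
      continuous_const.div (continuous_abs.add continuous_const) fun t => by positivity
    have hlim := (hcont.tendsto 0).mono_left (nhdsWithin_le_nhds (s := {0}ᶜ))
    rw [abs_zero, zero_add] at hlim ⊢
    rw [sq, div_mul_cancel_left₀ hε.ne', ← one_div]
    refine hlim.congr' ?_
    filter_upwards [self_mem_nhdsWithin] with t (ht : t ≠ 0)
    rw [slope_def_field, zero_div, sub_zero, sub_zero]
    field_simp
  · have hden : |s| + ε ≠ 0 := by positivity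
    refine (((hasDerivAt_id s).div ((hasDerivAt_abs hs).add_const ε) hden)).congr_deriv ?_
    rw [id, self_mul_sign]
    ring

theorem map_smul_add_one_sub_smul {V F L : Type*} [AddCommGroup V] [Module ℝ V]
    [AddCommGroup F] [Module ℝ F] [FunLike L V F] [LinearMapClass L ℝ V F]
    (E : L) (x Δ : V) (t : ℝ) :
    E (t • Δ + (1 - t) • x) = E x + t • E (Δ - x) := by
  rw [← map_smul, ← map_add]
  congr 1
  module

theorem tendsto_influence_of_hasDerivAt {V F : Type*} [AddCommGroup V] [Module ℝ V]
    [NormedAddCommGroup F] [NormedSpace ℝ F] {P : V → F} {x Δ : V} {v : F}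
    (h : HasDerivAt (fun t : ℝ => P (t • Δ + (1 - t) • x)) v 0) :
    Tendsto (fun t : ℝ => t⁻¹ • (P (t • Δ + (1 - t) • x) - P x)) (𝓝[>] 0) (𝓝 v) := by
  simpa using h.tendsto_slope_zero_right

theorem influence_function_robust (n : ℕ)
    (E : (Fin n → ℝ) →L[ℝ] (Fin n → ℝ)) (ε : ℝ) (hε : 0 < ε)
    (w : (Fin n → ℝ) → Fin n → ℝ)
    (hw : ∀ y i, w y i = 1 / (2 * (|E y i| + ε)))
    (P : (Fin n → ℝ) → Fin n → ℝ)
    (hP : ∀ y i, P y i = w y i * E y i)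
    (x Δ : Fin n → ℝ) :
    Filter.Tendsto (fun t : ℝ => t⁻¹ • (P (t • Δ + (1 - t) • x) - P x))
      (nhdsWithin 0 (Set.Ioi 0))
      (nhds (fun i => 2 * ε * (w x i) ^ 2 * E (Δ - x) i)) := by
  refine tendsto_influence_of_hasDerivAt (hasDerivAt_pi.2 fun i => ?_)
  have hline : HasDerivAt (fun t : ℝ => E x i + t * E (Δ - x) i) (E (Δ - x) i) 0 := by
    simpa using ((hasDerivAt_id (0 : ℝ)).mul_const (E (Δ - x) i)).const_add (E x i)
  have hPline : ∀ t : ℝ, P (t • Δ + (1 - t) • x) i =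
      (E x i + t * E (Δ - x) i) / (|E x i + t * E (Δ - x) i| + ε) / 2 := by
    intro t
    rw [hP, hw, map_smul_add_one_sub_smul E, Pi.add_apply, Pi.smul_apply, smul_eq_mul]
    field_simp
  simp only [hPline]
  refine (((hasDerivAt_div_abs_add hε _).comp 0 hline).div_const 2).congr_deriv ?_
  rw [hw, zero_mul, add_zero]
  field_simp
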